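/- Let V be a real inner product space, and let A : V × V → ℝ be a bilinear form that is coercive with constant μ > 0 with respect to a seminorm ‖·‖_DG on V, i.e. A(v,v) ≥ μ‖v‖²_DG for all v ∈ V. Suppose u : [0,T] → V is differentiable with (C χ)(u'(t), u(t)) + A(u(t), u(t)) + R(t) = F(t) for all t, where C, χ > 0, R(t) ≥ −K for a constant K ≥ 0, and F(t) ≤ 0. Then for all t ∈ [0,T], (Cχ/2)‖u(t)‖² + μ∫₀ᵗ ‖u(s)‖²_DG ds ≤ (Cχ/2)‖u(0)‖² + Kt. -/

import Mathlib

open MeasureTheory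

/-- If `q` is not integrable, the integral is `0` and the bound reduces to `g t - g 0 ≤ K t`,
which still holds since `q ≥ 0`. -/
theorem add_integral_le_of_hasDerivAt_add_le {g g' q : ℝ → ℝ} {K t : ℝ} (ht : 0 ≤ t)
    (hg : ∀ s ∈ Set.Icc 0 t, HasDerivAt g (g' s) s) (hq : ∀ s, 0 ≤ q s)
    (hle : ∀ s, g' s + q s ≤ K) :
    g t + ∫ s in (0 : ℝ)..t, q s ≤ g 0 + K * t := by
  have hcont : ContinuousOn g (Set.Icc 0 t) := fun s hs => (hg s hs).continuousAt.continuousWithinAt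
  have hderiv : ∀ s ∈ Set.Ioo 0 t, HasDerivWithinAt g (g' s) (Set.Ioi s) s :=
    fun s hs => (hg s (Set.Ioo_subset_Icc_self hs)).hasDerivWithinAt
  have hconst : IntegrableOn (fun _ : ℝ => K) (Set.Icc 0 t) :=
    integrableOn_const measure_Icc_lt_top.ne
  by_cases hint : IntervalIntegrable q volume 0 t
  · have hqIcc : IntegrableOn q (Set.Icc 0 t) := by
      rw [integrableOn_Icc_iff_integrableOn_Ioc]
      exact (intervalIntegrable_iff_integrableOn_Ioc_of_le ht).mp hint
    have key : g t - g 0 ≤ ∫ s in (0 : ℝ)..t, (K - q s) :=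
      intervalIntegral.sub_le_integral_of_hasDeriv_right_of_le ht hcont hderiv
        (hconst.sub hqIcc) fun s _ => by linarith [hle s]
    rw [intervalIntegral.integral_sub intervalIntegrable_const hint,
      intervalIntegral.integral_const, smul_eq_mul, sub_zero] at key
    linarith
  · have key : g t - g 0 ≤ ∫ _ in (0 : ℝ)..t, K :=
      intervalIntegral.sub_le_integral_of_hasDeriv_right_of_le ht hcont hderiv hconst
        fun s _ => by linarith [hle s, hq s]
    rw [intervalIntegral.integral_const, smul_eq_mul, sub_zero] at key
    rw [intervalIntegral.integral_undef hint]
    linarith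

theorem stmt_12_general {V : Type*} [NormedAddCommGroup V] [InnerProductSpace ℝ V]
    (A : V →ₗ[ℝ] V →ₗ[ℝ] ℝ) (nDG : V → ℝ) (μ : ℝ) (hμ : 0 < μ)
    (hcoer : ∀ v : V, μ * nDG v ^ 2 ≤ A v v)
    (T C χ : ℝ)
    (u u' : ℝ → V) (hu : ∀ t, HasDerivAt u (u' t) t)
    (R F : ℝ → ℝ) (K : ℝ)
    (hR : ∀ t, -K ≤ R t) (hF : ∀ t, F t ≤ 0)
    (heq : ∀ t, C * χ * (inner ℝ (u' t) (u t) : ℝ) + A (u t) (u t) + R t = F t) :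
    ∀ t ∈ Set.Icc (0 : ℝ) T,
      C * χ / 2 * ‖u t‖ ^ 2 + μ * ∫ s in (0 : ℝ)..t, nDG (u s) ^ 2 ≤
        C * χ / 2 * ‖u 0‖ ^ 2 + K * t := by
  rintro t ⟨ht, -⟩
  have henergy : ∀ s, HasDerivAt (fun s => C * χ / 2 * ‖u s‖ ^ 2)
      (C * χ * (inner ℝ (u' s) (u s) : ℝ)) s := fun s =>
    ((hu s).norm_sq.const_mul (C * χ / 2)).congr_deriv (by rw [real_inner_comm]; ring)
  have hbound : ∀ s, C * χ * (inner ℝ (u' s) (u s) : ℝ) + μ * nDG (u s) ^ 2 ≤ K := fun s => by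
    linarith [heq s, hcoer (u s), hR s, hF s]
  rw [← intervalIntegral.integral_const_mul]
  exact add_integral_le_of_hasDerivAt_add_le ht (fun s _ => henergy s)
    (fun s => by positivity) hbound

theorem stmt_12 {V : Type*} [NormedAddCommGroup V] [InnerProductSpace ℝ V]
    (A : V →ₗ[ℝ] V →ₗ[ℝ] ℝ) (nDG : V → ℝ) (μ : ℝ) (hμ : 0 < μ)
    (hcoer : ∀ v : V, μ * nDG v ^ 2 ≤ A v v)
    (T C χ : ℝ) (hT : 0 ≤ T) (hC : 0 < C) (hχ : 0 < χ)
    (u u' : ℝ → V) (hu : ∀ t, HasDerivAt u (u' t) t)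
    (R F : ℝ → ℝ) (K : ℝ) (hK : 0 ≤ K)
    (hR : ∀ t, -K ≤ R t) (hF : ∀ t, F t ≤ 0)
    (heq : ∀ t, C * χ * (inner ℝ (u' t) (u t) : ℝ) + A (u t) (u t) + R t = F t) :
    ∀ t ∈ Set.Icc (0 : ℝ) T,
      C * χ / 2 * ‖u t‖ ^ 2 + μ * ∫ s in (0 : ℝ)..t, nDG (u s) ^ 2 ≤
        C * χ / 2 * ‖u 0‖ ^ 2 + K * t :=
  stmt_12_general A nDG μ hμ hcoer T C χ u u' hu R F K hR hF heq
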